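/- Joint pgf: let N ~ MPMRF(λ, α, T), choose any root r ∈ V, and adopt the convention α_{(pa(r),r)} = 0. Then for all t = (t_v)_{v∈V} ∈ [−1,1]^V, E[∏_{v∈V} t_v^{N_v}] = ∏_{v∈V} exp( λ(1 − α_{(pa(v),v)}) (η_v(t) − 1) ), where the polynomials η_v are defined recursively from the leaves of the rooted tree by η_v(t) = t_v ∏_{j∈ch(v)} (1 − α_{(v,j)} + α_{(v,j)} η_j(t)), with η_v(t) = t_v when v has no children. -/

import Mathlib

open MeasureTheory ProbabilityTheory
open scoped ProbabilityTheory

/-- The Poisson probability mass function with mean `lam`, evaluated at `k`. -/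
noncomputable def poissonProb (lam : ℝ) (k : ℕ) : ℝ :=
  Real.exp (-lam) * lam ^ k / (Nat.factorial k)

/-- The MPMRF construction: a tree-structured Markov random field with Poisson(`lam`)
marginals, built on a tree `G` rooted at `root` via the stochastic representation
`N_root = L_root` and `N_v = α_{(pa v, v)} ∘ N_{pa v} + L_v` for `v ≠ root`, where `∘`
denotes binomial thinning (realized through the i.i.d. Bernoulli indicators `I v i`),
the innovations `L_v` are Poisson, and all innovations and indicator sequences are
mutually independent. -/
structure MPMRF {V : Type} [Fintype V] [DecidableEq V]
    (G : SimpleGraph V) (lam : ℝ) (alpha : Sym2 V → ℝ)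
    (Ω : Type) [MeasureSpace Ω] : Type where
  /-- the underlying graph is a tree -/
  isTree : G.IsTree
  lam_pos : 0 < lam
  alpha_mem : ∀ e ∈ G.edgeSet, alpha e ∈ Set.Icc (0 : ℝ) 1
  /-- the chosen root -/
  root : V
  /-- the parent function of the rooted tree -/
  pa : V → V
  pa_adj : ∀ v, v ≠ root → G.Adj (pa v) v
  pa_dist : ∀ v, v ≠ root → G.dist root (pa v) + 1 = G.dist root v
  /-- innovation random variables -/
  L : V → Ω → ℕ
  /-- Bernoulli indicators used in the binomial thinnings -/
  I : V → ℕ → Ω → ℕ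
  /-- the components of the Markov random field -/
  N : V → Ω → ℕ
  meas_L : ∀ v, Measurable (L v)
  meas_I : ∀ v i, Measurable (I v i)
  meas_N : ∀ v, Measurable (N v)
  I_le_one : ∀ v i ω, I v i ω ≤ 1
  I_bern : ∀ v, v ≠ root → ∀ i,
    ℙ {ω | I v i ω = 1} = ENNReal.ofReal (alpha s(pa v, v))
  L_root_poisson : ∀ k, ℙ {ω | L root ω = k} = ENNReal.ofReal (poissonProb lam k)
  L_poisson : ∀ v, v ≠ root → ∀ k,
    ℙ {ω | L v ω = k} =
      ENNReal.ofReal (poissonProb (lam * (1 - alpha s(pa v, v))) k)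
  /-- the innovations and all indicator variables are mutually independent -/
  indep : iIndepFun
    (Sum.elim L (fun p : V × ℕ => I p.1 p.2)) ℙ
  N_root : N root = L root
  N_rec : ∀ v, v ≠ root → ∀ ω,
    N v ω = (∑ i ∈ Finset.range (N (pa v) ω), I v i ω) + L v ω

/-!
Peel the tree off one leaf at a time. Let `w ≠ r` be a leaf of a parent-closed vertex set `A`.
Every `N_v` with `v ∈ A \ {w}`, in particular `N_{pa w}`, is a function of the innovations and
indicators at vertices other than `w`, and these are independent of those at `w`. Hence, freezing
`N_{pa w} = k`, `E[t_w ^ (α_w ∘ k + L_w)] = (1 - α_w + α_w t_w) ^ k · exp(λ (1 - α_w) (t_w - 1))`: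
the leaf contributes its exponential factor and multiplies the argument of its parent by
`1 - α_w + α_w t_w`, which is the recursion defining `η`. Induction on `A` (with arguments that
stay in `[-1, 1]`) ends at the root, where `N_r = L_r` is Poisson(λ).
-/

lemma poissonProb_nonneg {lam : ℝ} (h : 0 ≤ lam) (k : ℕ) : 0 ≤ poissonProb lam k := by
  unfold poissonProb; positivity

lemma tsum_poissonProb_mul_pow (mu s : ℝ) :
    ∑' k : ℕ, poissonProb mu k * s ^ k = Real.exp (mu * (s - 1)) := by
  have hterm : ∀ k : ℕ, poissonProb mu k * s ^ k
      = Real.exp (-mu) * ((mu * s) ^ k / k.factorial) := by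
    intro k; unfold poissonProb; rw [mul_pow]; ring
  have hexp : ∑' k : ℕ, (mu * s) ^ k / k.factorial = Real.exp (mu * s) := by
    rw [Real.exp_eq_exp_ℝ, NormedSpace.exp_eq_tsum_div]
  rw [tsum_congr hterm, tsum_mul_left, hexp, ← Real.exp_add]
  ring_nf

lemma abs_one_sub_add_mul_le_one {a x : ℝ} (ha : a ∈ Set.Icc (0 : ℝ) 1) (hx : |x| ≤ 1) :
    |1 - a + a * x| ≤ 1 := by
  obtain ⟨hx₁, hx₂⟩ := abs_le.mp hx
  rw [abs_le]
  constructor <;> nlinarith [ha.1, ha.2]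

lemma Finset.prod_update_mul_pow {ι α : Type*} [DecidableEq ι] [CommMonoid α] {B : Finset ι}
    {p : ι} (hp : p ∈ B) (s : ι → α) (n : ι → ℕ) (b : α) :
    ∏ v ∈ B, Function.update s p (s p * b) v ^ n v = (∏ v ∈ B, s v ^ n v) * b ^ n p := by
  rw [← Finset.mul_prod_erase B _ hp, ← Finset.mul_prod_erase B (fun v => s v ^ n v) hp,
    Function.update_self, mul_pow,
    Finset.prod_congr rfl fun v hv => by rw [Function.update_of_ne (Finset.ne_of_mem_erase hv)]]
  exact mul_right_comm _ _ _

lemma abs_update_mul_le_one {ι : Type*} [DecidableEq ι] {s : ι → ℝ} (hs : ∀ v, |s v| ≤ 1)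
    (p : ι) {b : ℝ} (hb : |b| ≤ 1) (v : ι) : |Function.update s p (s p * b) v| ≤ 1 := by
  rcases eq_or_ne v p with rfl | hv
  · rw [Function.update_self, abs_mul]
    exact mul_le_one₀ (hs v) (abs_nonneg b) hb
  · rw [Function.update_of_ne hv]
    exact hs v

lemma abs_pow_le_one_of_abs_le_one {x : ℝ} (hx : |x| ≤ 1) (n : ℕ) : |x ^ n| ≤ 1 := by
  rw [abs_pow]; exact pow_le_one₀ (abs_nonneg x) hx

lemma abs_prod_pow_le_one {ι : Type*} (B : Finset ι) {s : ι → ℝ} (hs : ∀ v, |s v| ≤ 1)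
    (n : ι → ℕ) : |∏ v ∈ B, s v ^ n v| ≤ 1 := by
  rw [Finset.abs_prod]
  exact Finset.prod_le_one (fun v _ => abs_nonneg _)
    fun v _ => abs_pow_le_one_of_abs_le_one (hs v) (n v)

namespace ProbabilityTheory

variable {Ω : Type*} {mΩ : MeasurableSpace Ω} {μ : Measure Ω}

lemma integrable_of_abs_le_one [IsFiniteMeasure μ] {f : Ω → ℝ} (hf : Measurable f)
    (hb : ∀ ω, |f ω| ≤ 1) : Integrable f μ :=
  .of_bound hf.aestronglyMeasurable 1 (ae_of_all _ hb)

lemma measurable_apply_nat_index {α : Type*} [MeasurableSpace α] {m : MeasurableSpace Ω}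
    {K : Ω → ℕ} (hK : Measurable[m] K) {f : ℕ → Ω → α} (hf : ∀ k, Measurable[m] (f k)) :
    Measurable[m] fun ω => f (K ω) ω := by
  intro t ht
  have hpre : (fun ω => f (K ω) ω) ⁻¹' t = ⋃ k, K ⁻¹' {k} ∩ f k ⁻¹' t := by
    ext ω
    simp only [Set.mem_preimage, Set.mem_iUnion, Set.mem_inter_iff, Set.mem_singleton_iff]
    exact ⟨fun h => ⟨K ω, rfl, h⟩, fun ⟨k, hk, h⟩ => hk ▸ h⟩
  rw [hpre]
  exact .iUnion fun k => (hK (measurableSet_singleton k)).inter (hf k ht)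

lemma integral_eq_tsum_setIntegral_fiber {K : Ω → ℕ} (hK : Measurable K) {f : Ω → ℝ}
    (hf : Integrable f μ) : ∫ ω, f ω ∂μ = ∑' k, ∫ ω in K ⁻¹' {k}, f ω ∂μ := by
  have hcover : (⋃ k, K ⁻¹' {k}) = Set.univ := by ext ω; simp
  rw [← setIntegral_univ, ← hcover]
  exact integral_iUnion (fun k => hK (measurableSet_singleton k)) (pairwise_disjoint_fiber K)
    (hcover ▸ hf.integrableOn)

lemma integral_pow_eq_tsum [IsFiniteMeasure μ] {X : Ω → ℕ} (hX : Measurable X) {s : ℝ}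
    (hs : |s| ≤ 1) : ∫ ω, s ^ X ω ∂μ = ∑' k, μ.real {ω | X ω = k} * s ^ k := by
  have hint : Integrable (fun n : ℕ => s ^ n) (μ.map X) :=
    integrable_of_abs_le_one (measurable_of_countable _) (abs_pow_le_one_of_abs_le_one hs)
  rw [← integral_map hX.aemeasurable (measurable_of_countable _).aestronglyMeasurable,
    integral_countable hint]
  refine tsum_congr fun k => ?_
  rw [map_measureReal_apply hX (measurableSet_singleton k), smul_eq_mul]
  rfl

lemma integral_pow_of_poisson [IsFiniteMeasure μ] {X : Ω → ℕ} (hX : Measurable X) {mu : ℝ}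
    (hmu : 0 ≤ mu) (hX_law : ∀ k, μ {ω | X ω = k} = ENNReal.ofReal (poissonProb mu k))
    {s : ℝ} (hs : |s| ≤ 1) : ∫ ω, s ^ X ω ∂μ = Real.exp (mu * (s - 1)) := by
  rw [integral_pow_eq_tsum hX hs, ← tsum_poissonProb_mul_pow]
  refine tsum_congr fun k => ?_
  rw [measureReal_def, hX_law k, ENNReal.toReal_ofReal (poissonProb_nonneg hmu k)]

lemma integral_pow_of_bernoulli [IsProbabilityMeasure μ] {X : Ω → ℕ} (hX : Measurable X)
    (hX_le : ∀ ω, X ω ≤ 1) {a : ℝ} (ha : 0 ≤ a) (hX_one : μ {ω | X ω = 1} = ENNReal.ofReal a)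
    (s : ℝ) : ∫ ω, s ^ X ω ∂μ = 1 - a + a * s := by
  have hm : MeasurableSet {ω | X ω = 1} := hX (measurableSet_singleton 1)
  have hpow : ∀ ω, s ^ X ω = 1 + (s - 1) * {ω | X ω = 1}.indicator 1 ω := by
    intro ω
    rcases Nat.le_one_iff_eq_zero_or_eq_one.mp (hX_le ω) with h | h <;> simp [Set.indicator, h]
  rw [integral_congr_ae (ae_of_all _ hpow),
    integral_add (integrable_const _) (((integrable_const 1).indicator hm).const_mul _),
    integral_const_mul, integral_indicator_one hm, measureReal_def, hX_one,
    ENNReal.toReal_ofReal ha]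
  simp only [integral_const, probReal_univ, smul_eq_mul]
  ring

lemma iIndepFun.integral_finset_prod {ι : Type*} {X : ι → Ω → ℝ} (hX : iIndepFun X μ)
    (hm : ∀ i, Measurable (X i)) (S : Finset ι) :
    ∫ ω, ∏ i ∈ S, X i ω ∂μ = ∏ i ∈ S, ∫ ω, X i ω ∂μ := by
  have h := (hX.precomp Subtype.val_injective).integral_fun_prod_eq_prod_integral
    (fun i : S => (hm i).aestronglyMeasurable)
  rw [← Finset.prod_coe_sort S (fun i => ∫ ω, X i ω ∂μ), ← h]
  congr with ω
  exact (Finset.prod_coe_sort S _).symm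

lemma Indep.setIntegral_fiber_mul_apply_index {m₁ m₂ : MeasurableSpace Ω}
    (hm₁ : m₁ ≤ mΩ) (hm₂ : m₂ ≤ mΩ) (hind : Indep m₁ m₂ μ)
    {F : Ω → ℝ} {K : Ω → ℕ} {H : ℕ → Ω → ℝ}
    (hF : Measurable[m₁] F) (hK : Measurable[m₁] K) (hH : ∀ k, Measurable[m₂] (H k)) (k : ℕ) :
    ∫ ω in K ⁻¹' {k}, F ω * H (K ω) ω ∂μ = ∫ ω in K ⁻¹' {k}, F ω * ∫ ω', H (K ω) ω' ∂μ ∂μ := by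
  have hS : MeasurableSet[m₁] (K ⁻¹' {k}) := hK (measurableSet_singleton k)
  have hFk : Measurable[m₁] ((K ⁻¹' {k}).indicator F) := hF.indicator hS
  have hindep : IndepFun ((K ⁻¹' {k}).indicator F) (H k) μ :=
    (IndepFun_iff_Indep _ _ _).2 (indep_of_indep_of_le hind hFk.comap_le (hH k).comap_le)
  calc ∫ ω in K ⁻¹' {k}, F ω * H (K ω) ω ∂μ
      = ∫ ω, (K ⁻¹' {k}).indicator F ω * H k ω ∂μ := by
        rw [← integral_indicator (hm₁ _ hS)]
        congr 1 with ω
        by_cases hω : ω ∈ K ⁻¹' {k}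
        · rw [Set.indicator_of_mem hω, Set.indicator_of_mem hω, (hω : K ω = k)]
        · simp [Set.indicator_of_notMem hω]
    _ = (∫ ω in K ⁻¹' {k}, F ω ∂μ) * ∫ ω, H k ω ∂μ := by
        rw [hindep.integral_fun_mul_eq_mul_integral (hFk.mono hm₁ le_rfl).aestronglyMeasurable
          ((hH k).mono hm₂ le_rfl).aestronglyMeasurable, integral_indicator (hm₁ _ hS)]
    _ = ∫ ω in K ⁻¹' {k}, F ω * ∫ ω', H (K ω) ω' ∂μ ∂μ := by
        rw [← integral_mul_const]
        refine setIntegral_congr_fun (hm₁ _ hS) fun ω hω => ?_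
        rw [(hω : K ω = k)]

theorem Indep.integral_mul_apply_index [IsProbabilityMeasure μ] {m₁ m₂ : MeasurableSpace Ω}
    (hm₁ : m₁ ≤ mΩ) (hm₂ : m₂ ≤ mΩ) (hind : Indep m₁ m₂ μ)
    {F : Ω → ℝ} {K : Ω → ℕ} {H : ℕ → Ω → ℝ}
    (hF : Measurable[m₁] F) (hK : Measurable[m₁] K) (hH : ∀ k, Measurable[m₂] (H k))
    (hFb : ∀ ω, |F ω| ≤ 1) (hHb : ∀ k ω, |H k ω| ≤ 1) :
    ∫ ω, F ω * H (K ω) ω ∂μ = ∫ ω, F ω * ∫ ω', H (K ω) ω' ∂μ ∂μ := by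
  have hK' : Measurable[mΩ] K := hK.mono hm₁ le_rfl
  have hF' : Measurable[mΩ] F := hF.mono hm₁ le_rfl
  have hmean : ∀ k, |∫ ω, H k ω ∂μ| ≤ 1 := fun k => by
    simpa using norm_integral_le_of_norm_le (f := H k) (μ := μ) (integrable_const 1)
      (ae_of_all _ (hHb k))
  have hint : Integrable (fun ω => F ω * H (K ω) ω) μ :=
    integrable_of_abs_le_one (hF'.mul (measurable_apply_nat_index hK'
      fun k => (hH k).mono hm₂ le_rfl)) fun ω => by
        rw [abs_mul]; exact mul_le_one₀ (hFb ω) (abs_nonneg _) (hHb _ ω)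
  have hint' : Integrable (fun ω => F ω * ∫ ω', H (K ω) ω' ∂μ) μ :=
    integrable_of_abs_le_one
      (hF'.mul ((measurable_of_countable fun k => ∫ ω', H k ω' ∂μ).comp hK')) fun ω => by
        rw [abs_mul]; exact mul_le_one₀ (hFb ω) (abs_nonneg _) (hmean _)
  rw [integral_eq_tsum_setIntegral_fiber hK' hint, integral_eq_tsum_setIntegral_fiber hK' hint',
    tsum_congr (hind.setIntegral_fiber_mul_apply_index hm₁ hm₂ hF hK hH)]

end ProbabilityTheory

namespace MPMRF

def vertexOf {V : Type} : V ⊕ V × ℕ → V := Sum.elim id Prod.fst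

variable {V : Type} [Fintype V] [DecidableEq V] {G : SimpleGraph V} {lam : ℝ}
  {alpha : Sym2 V → ℝ} {Ω : Type} [MeasureSpace Ω] (M : MPMRF G lam alpha Ω)

def family : V ⊕ V × ℕ → Ω → ℕ := Sum.elim M.L fun p => M.I p.1 p.2

abbrev sigmaOn (S : Set V) : MeasurableSpace Ω :=
  ⨆ j ∈ vertexOf ⁻¹' S, MeasurableSpace.comap (M.family j) inferInstance

def ParentClosed (A : Finset V) : Prop := ∀ v ∈ A, v ≠ M.root → M.pa v ∈ A

def children (A : Finset V) (v : V) : Finset V := A.filter fun j => j ≠ M.root ∧ M.pa j = v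

def EtaRecursion (A : Finset V) (s η : V → ℝ) : Prop :=
  ∀ v ∈ A, η v = s v * ∏ j ∈ M.children A v, (1 - alpha s(v, j) + alpha s(v, j) * η j)

lemma measurable_family (j : V ⊕ V × ℕ) : Measurable (M.family j) := by
  rcases j with v | ⟨v, i⟩
  exacts [M.meas_L v, M.meas_I v i]

lemma sigmaOn_le (S : Set V) : M.sigmaOn S ≤ ‹MeasureSpace Ω›.toMeasurableSpace :=
  iSup₂_le fun j _ => (M.measurable_family j).comap_le

lemma measurable_family_sigmaOn {S : Set V} {j : V ⊕ V × ℕ} (hj : vertexOf j ∈ S) :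
    Measurable[M.sigmaOn S] (M.family j) :=
  measurable_iff_comap_le.mpr
    (le_iSup₂ (f := fun j (_ : j ∈ vertexOf ⁻¹' S) => MeasurableSpace.comap (M.family j) _) j hj)

lemma indep_sigmaOn {S T : Set V} (hST : Disjoint S T) :
    Indep (M.sigmaOn S) (M.sigmaOn T) ℙ :=
  indep_iSup_of_disjoint (fun j => (M.measurable_family j).comap_le) M.indep.iIndep
    (hST.preimage vertexOf)

lemma pa_ne_self {v : V} (hv : v ≠ M.root) : M.pa v ≠ v := by
  intro h
  have := M.pa_dist v hv
  rw [h] at this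
  omega

lemma alpha_pa_mem {v : V} (hv : v ≠ M.root) : alpha s(M.pa v, v) ∈ Set.Icc (0 : ℝ) 1 :=
  M.alpha_mem _ (M.pa_adj v hv)

variable {M} in
lemma ParentClosed.erase {A : Finset V} (hA : M.ParentClosed A) {w : V}
    (hleaf : M.children A w = ∅) : M.ParentClosed (A.erase w) := by
  intro v hv hvr
  have hvA := Finset.mem_of_mem_erase hv
  refine Finset.mem_erase.mpr ⟨fun hpa => ?_, hA v hvA hvr⟩
  have : v ∈ M.children A w := Finset.mem_filter.mpr ⟨hvA, hvr, hpa⟩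
  simp [hleaf] at this

variable {M} in
lemma EtaRecursion.apply_leaf {A : Finset V} {s η : V → ℝ} (hη : M.EtaRecursion A s η) {w : V}
    (hwA : w ∈ A) (hleaf : M.children A w = ∅) : η w = s w := by
  simpa [hleaf] using hη w hwA

variable {M} in
lemma EtaRecursion.erase_leaf {A : Finset V} {s η : V → ℝ} (hη : M.EtaRecursion A s η) {w : V}
    (hwA : w ∈ A) (hw : w ≠ M.root) (hleaf : M.children A w = ∅) :
    M.EtaRecursion (A.erase w) (Function.update s (M.pa w)
      (s (M.pa w) * (1 - alpha s(M.pa w, w) + alpha s(M.pa w, w) * s w))) η := by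
  intro v hv
  rw [children, Finset.filter_erase, ← children, hη v (Finset.mem_of_mem_erase hv)]
  by_cases hvw : v = M.pa w
  · subst hvw
    have hw_child : w ∈ M.children A (M.pa w) := Finset.mem_filter.mpr ⟨hwA, hw, rfl⟩
    rw [← Finset.mul_prod_erase _ _ hw_child, Function.update_self, hη.apply_leaf hwA hleaf]
    ring
  · have hw_not : w ∉ M.children A v := fun h => hvw (Finset.mem_filter.mp h).2.2.symm
    rw [Finset.erase_eq_of_notMem hw_not, Function.update_of_ne hvw]

lemma children_eq_empty_of_isMax_dist {A : Finset V} {w : V}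
    (hmax : ∀ v ∈ A, G.dist M.root v ≤ G.dist M.root w) : M.children A w = ∅ :=
  Finset.filter_eq_empty_iff.mpr fun j hj ⟨hjr, hpa⟩ => by
    have := M.pa_dist j hjr
    have := hmax j hj
    rw [hpa] at *
    omega

lemma eq_root_of_dist_eq_zero {v : V} (h : G.dist M.root v = 0) : v = M.root :=
  (M.isTree.connected.dist_eq_zero_iff.mp h).symm

lemma measurable_N_sigmaOn {S : Set V} {A : Finset V} (hA : M.ParentClosed A)
    (hAS : ∀ v ∈ A, v ∈ S) (v : V) (hv : v ∈ A) : Measurable[M.sigmaOn S] (M.N v) := by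
  by_cases hvr : v = M.root
  · rw [hvr, M.N_root]
    exact M.measurable_family_sigmaOn (j := .inl M.root) (hAS _ (hvr ▸ hv))
  · have hpa := measurable_N_sigmaOn hA hAS (M.pa v) (hA v hv hvr)
    rw [funext (M.N_rec v hvr)]
    have hthin : Measurable[M.sigmaOn S]
        fun ω => ∑ i ∈ Finset.range (M.N (M.pa v) ω), M.I v i ω :=
      measurable_apply_nat_index hpa fun k => Finset.measurable_sum _ fun i _ =>
        M.measurable_family_sigmaOn (j := .inr (v, i)) (hAS v hv)
    exact hthin.add (M.measurable_family_sigmaOn (j := .inl v) (hAS v hv))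
termination_by G.dist M.root v
decreasing_by have := M.pa_dist v hvr; omega

variable [IsProbabilityMeasure (ℙ : Measure Ω)]

lemma integral_pow_N_root {s : ℝ} (hs : |s| ≤ 1) :
    ∫ ω, s ^ M.N M.root ω ∂ℙ = Real.exp (lam * (s - 1)) := by
  rw [M.N_root]
  exact integral_pow_of_poisson (M.meas_L _) M.lam_pos.le M.L_root_poisson hs

lemma integral_pow_thinning_add {w : V} (hw : w ≠ M.root) (k : ℕ) {s : ℝ} (hs : |s| ≤ 1) :
    ∫ ω, s ^ ((∑ i ∈ Finset.range k, M.I w i ω) + M.L w ω) ∂ℙ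
      = (1 - alpha s(M.pa w, w) + alpha s(M.pa w, w) * s) ^ k
        * Real.exp (lam * (1 - alpha s(M.pa w, w)) * (s - 1)) := by
  obtain ⟨ha₀, ha₁⟩ := M.alpha_pa_mem hw
  set D : Finset (V ⊕ V × ℕ) := ({w} : Finset V).disjSum
    ((Finset.range k).map (Function.Embedding.sectR w ℕ))
  have hprod : ∀ ω, s ^ ((∑ i ∈ Finset.range k, M.I w i ω) + M.L w ω)
      = ∏ j ∈ D, s ^ M.family j ω := by
    intro ω
    rw [Finset.prod_disjSum, Finset.prod_singleton, Finset.prod_map, pow_add,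
      Finset.prod_pow_eq_pow_sum, mul_comm]
    rfl
  have hindep : iIndepFun (fun j ω => s ^ M.family j ω) ℙ :=
    M.indep.comp (fun _ n => s ^ n) fun _ => measurable_of_countable _
  rw [integral_congr_ae (ae_of_all _ hprod),
    hindep.integral_finset_prod (fun j => (measurable_of_countable _).comp (M.measurable_family j)),
    Finset.prod_disjSum, Finset.prod_singleton, Finset.prod_map]
  have hL : ∫ ω, s ^ M.L w ω ∂ℙ = Real.exp (lam * (1 - alpha s(M.pa w, w)) * (s - 1)) :=
    integral_pow_of_poisson (M.meas_L w) (mul_nonneg M.lam_pos.le (by linarith))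
      (M.L_poisson w hw) hs
  have hI : ∀ i, ∫ ω, s ^ M.I w i ω ∂ℙ = 1 - alpha s(M.pa w, w) + alpha s(M.pa w, w) * s :=
    fun i => integral_pow_of_bernoulli (M.meas_I w i) (M.I_le_one w i) ha₀ (M.I_bern w hw i) s
  simp only [family, Sum.elim_inl, Sum.elim_inr, Function.Embedding.sectR_apply]
  rw [hL, Finset.prod_congr rfl fun i _ => hI i, Finset.prod_const, Finset.card_range, mul_comm]

lemma integral_prod_pow_erase_leaf {A : Finset V} (hA : M.ParentClosed A) {w : V} (hwA : w ∈ A)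
    (hw : w ≠ M.root) (hleaf : M.children A w = ∅) {s : V → ℝ} (hs : ∀ v, |s v| ≤ 1) :
    ∫ ω, ∏ v ∈ A, s v ^ M.N v ω ∂ℙ
      = Real.exp (lam * (1 - alpha s(M.pa w, w)) * (s w - 1)) *
        ∫ ω, ∏ v ∈ A.erase w, Function.update s (M.pa w)
          (s (M.pa w) * (1 - alpha s(M.pa w, w) + alpha s(M.pa w, w) * s w)) v ^ M.N v ω ∂ℙ := by
  set β := 1 - alpha s(M.pa w, w) + alpha s(M.pa w, w) * s w
  have hpaw : M.pa w ∈ A.erase w := Finset.mem_erase.mpr ⟨M.pa_ne_self hw, hA w hwA hw⟩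
  have hrest : ∀ v ∈ A.erase w, Measurable[M.sigmaOn {w}ᶜ] (M.N v) :=
    M.measurable_N_sigmaOn (hA.erase hleaf) fun v hv => Finset.ne_of_mem_erase hv
  have hthin : ∀ k, Measurable[M.sigmaOn {w}]
      fun ω => s w ^ ((∑ i ∈ Finset.range k, M.I w i ω) + M.L w ω) := fun k =>
    (measurable_of_countable _).comp ((Finset.measurable_sum _ fun i _ =>
      M.measurable_family_sigmaOn (j := .inr (w, i)) rfl).add
        (M.measurable_family_sigmaOn (j := .inl w) rfl))
  calc ∫ ω, ∏ v ∈ A, s v ^ M.N v ω ∂ℙ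
      = ∫ ω, (∏ v ∈ A.erase w, s v ^ M.N v ω) *
          s w ^ ((∑ i ∈ Finset.range (M.N (M.pa w) ω), M.I w i ω) + M.L w ω) ∂ℙ := by
        congr with ω
        rw [← Finset.mul_prod_erase A _ hwA, M.N_rec w hw ω, mul_comm]
    _ = ∫ ω, (∏ v ∈ A.erase w, s v ^ M.N v ω) *
          ∫ ω', s w ^ ((∑ i ∈ Finset.range (M.N (M.pa w) ω), M.I w i ω') + M.L w ω') ∂ℙ ∂ℙ :=
        (M.indep_sigmaOn disjoint_compl_left).integral_mul_apply_index (M.sigmaOn_le _)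
          (M.sigmaOn_le _) (Finset.measurable_prod _ fun v hv =>
            (measurable_of_countable _).comp (hrest v hv))
          (hrest _ hpaw) hthin (fun ω => abs_prod_pow_le_one _ hs _)
          fun k ω => abs_pow_le_one_of_abs_le_one (hs w) _
    _ = ∫ ω, Real.exp (lam * (1 - alpha s(M.pa w, w)) * (s w - 1)) *
          ((∏ v ∈ A.erase w, s v ^ M.N v ω) * β ^ M.N (M.pa w) ω) ∂ℙ := by
        congr with ω
        rw [M.integral_pow_thinning_add hw _ (hs w)]
        ring
    _ = _ := by
        rw [integral_const_mul]
        simp_rw [Finset.prod_update_mul_pow hpaw]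

theorem integral_prod_pow_of_parentClosed (A : Finset V) (hA : M.ParentClosed A) (s : V → ℝ)
    (hs : ∀ v, |s v| ≤ 1) (η : V → ℝ) (hη : M.EtaRecursion A s η) :
    ∫ ω, ∏ v ∈ A, s v ^ M.N v ω ∂ℙ
      = ∏ v ∈ A,
          Real.exp (lam * (1 - if v = M.root then 0 else alpha s(M.pa v, v)) * (η v - 1)) := by
  induction A using Finset.strongInduction generalizing s with
  | _ A ih =>
  rcases A.eq_empty_or_nonempty with rfl | hne
  · simp
  obtain ⟨w, hwA, hmax⟩ := A.exists_max_image (G.dist M.root) hne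
  have hleaf := M.children_eq_empty_of_isMax_dist hmax
  have hηw := hη.apply_leaf hwA hleaf
  by_cases hw : w = M.root
  · subst hw
    obtain rfl : A = {M.root} := Finset.eq_singleton_iff_unique_mem.mpr
      ⟨hwA, fun v hv => M.eq_root_of_dist_eq_zero (by simpa using hmax v hv)⟩
    simp only [Finset.prod_singleton, ↓reduceIte, M.integral_pow_N_root (hs _), hηw, sub_zero,
      mul_one]
  · have hs' := abs_update_mul_le_one hs (M.pa w)
      (abs_one_sub_add_mul_le_one (M.alpha_pa_mem hw) (hs w))
    rw [M.integral_prod_pow_erase_leaf hA hwA hw hleaf hs,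
      ih _ (Finset.erase_ssubset hwA) (hA.erase hleaf) _ hs'
        (hη.erase_leaf hwA hw hleaf),
      ← Finset.mul_prod_erase A _ hwA, if_neg hw, hηw]

end MPMRF

/-- Joint pgf of the MPMRF: for `t ∈ [−1,1]^V` and `η : V → ℝ`
satisfying the recursion (from the leaves) `η v = t v * ∏_{j ∈ ch(v)} (1 − α_{(v,j)} +
α_{(v,j)} η j)`, we have
`E[∏_v t_v ^ N_v] = ∏_v exp(λ (1 − α_{(pa v, v)}) (η v − 1))`,
with the convention `α_{(pa r, r)} = 0` at the root. -/
theorem mpmrf_joint_pgf {V : Type} [Fintype V] [DecidableEq V]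
    (G : SimpleGraph V) (lam : ℝ) (alpha : Sym2 V → ℝ)
    (Ω : Type) [MeasureSpace Ω] [IsProbabilityMeasure (ℙ : Measure Ω)]
    (M : MPMRF G lam alpha Ω)
    (t : V → ℝ) (ht : ∀ v, t v ∈ Set.Icc (-1 : ℝ) 1)
    (η : V → ℝ)
    (hη : ∀ v : V, η v
      = t v * ∏ j ∈ Finset.univ.filter (fun j => j ≠ M.root ∧ M.pa j = v),
          (1 - alpha s(v, j) + alpha s(v, j) * η j)) :
    ∫ ω, ∏ v : V, (t v : ℝ) ^ (M.N v ω) ∂ℙ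
      = ∏ v : V,
          Real.exp (lam * (1 - if v = M.root then 0 else alpha s(M.pa v, v)) * (η v - 1)) :=
  M.integral_prod_pow_of_parentClosed Finset.univ (fun _ _ _ => Finset.mem_univ _) t
    (fun v => abs_le.mpr (ht v)) η fun v _ => hη v
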